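/- arXiv:1712.07264 — 2 statements merged into one kernel-verified Lean document; each statement's English description precedes it below -/
import Mathlib

section
/- Let f : ℝ → ℂ be a continuous function. Then the following are equivalent: (1) for every n ∈ ℕ, all points x₁,…,xₙ ∈ ℝ and all scalars c₁,…,cₙ ∈ ℂ, the sum ∑ᵢ∑ⱼ cᵢ·conj(cⱼ)·f(xᵢ − xⱼ) is a nonnegative real number; (2) for every continuous compactly supported function φ : ℝ → ℂ, the double integral ∫ℝ∫ℝ φ(x)·conj(φ(y))·f(x − y) dx dy is a nonnegative real number. -/
/-!
(1) ⇒ (2): if `φ` is supported in `[a, b]`, the double integral is the limit of the iterated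
Riemann sums of `φ x * conj (φ y) * f (x - y)` on a uniform grid of `[a, b]`, and each such sum is
a quadratic sum of (1), with the grid points as `xᵢ` and `cᵢ = Δ φ(xᵢ)`.

(2) ⇒ (1): test (2) against `φ = ∑ cᵢ ρ(· - xᵢ)` for normed bumps `ρ` of shrinking support. The
double integral expands into `∑ cᵢ conj(cⱼ) ∫ ρ(x - xᵢ) ρ(y - xⱼ) f(x - y)`, and the product kernel
is an approximate identity at `(xᵢ, xⱼ)`, so these integrals tend to `f(xᵢ - xⱼ)`.

In both directions nonnegativity passes to the limit because `{z : ℂ | 0 ≤ z}` is closed.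
-/

open MeasureTheory ComplexOrder Filter Set Finset Function Metric
open scoped Topology Interval

section RiemannSum

variable {E : Type*} [NormedAddCommGroup E] [NormedSpace ℝ E]

noncomputable def gridPoint (a b : ℝ) (N k : ℕ) : ℝ := a + k * ((b - a) / N)

noncomputable def riemannSum (g : ℝ → E) (a b : ℝ) (N : ℕ) : E :=
  ∑ k ∈ range N, ((b - a) / N) • g (gridPoint a b N k)

lemma gridPoint_succ_sub (a b : ℝ) (N k : ℕ) :
    gridPoint a b N (k + 1) - gridPoint a b N k = (b - a) / N := by
  simp only [gridPoint]; push_cast; ring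

lemma gridPoint_mem_Icc {a b : ℝ} (hab : a ≤ b) {N k : ℕ} (hk : k ≤ N) :
    gridPoint a b N k ∈ Icc a b := by
  have hkN : (k : ℝ) / N ≤ 1 := div_le_one_of_le₀ (by exact_mod_cast hk) N.cast_nonneg
  have hk0 : 0 ≤ (k : ℝ) / N := by positivity
  have : gridPoint a b N k = a + (k / N) * (b - a) := by simp only [gridPoint]; ring
  rw [this]
  constructor <;> nlinarith

lemma riemannSum_sub (g h : ℝ → E) (a b : ℝ) (N : ℕ) :
    riemannSum g a b N - riemannSum h a b N = riemannSum (fun x => g x - h x) a b N := by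
  simp only [riemannSum, ← sum_sub_distrib, smul_sub]

lemma norm_riemannSum_le {g : ℝ → E} {a b C : ℝ} {N : ℕ} (hN : 0 < N) (hab : a ≤ b)
    (hg : ∀ k < N, ‖g (gridPoint a b N k)‖ ≤ C) : ‖riemannSum g a b N‖ ≤ (b - a) * C := by
  have hΔ : 0 ≤ (b - a) / N := div_nonneg (sub_nonneg.2 hab) N.cast_nonneg
  calc ‖riemannSum g a b N‖ ≤ ∑ _k ∈ range N, (b - a) / N * C := by
        refine norm_sum_le_of_le _ fun k hk => ?_
        rw [norm_smul, Real.norm_of_nonneg hΔ]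
        exact mul_le_mul_of_nonneg_left (hg k (mem_range.1 hk)) hΔ
    _ = (b - a) * C := by
        rw [sum_const, card_range, nsmul_eq_mul]; field_simp

theorem norm_intervalIntegral_sub_riemannSum_le [CompleteSpace E] {g : ℝ → E} {a b ε : ℝ}
    {N : ℕ} (hN : 0 < N) (hab : a ≤ b) (hg : Continuous g)
    (hmod : ∀ x ∈ Icc a b, ∀ y ∈ Icc a b, |x - y| ≤ (b - a) / N → ‖g x - g y‖ ≤ ε) :
    ‖(∫ x in a..b, g x) - riemannSum g a b N‖ ≤ ε * (b - a) := by
  set t := gridPoint a b N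
  have hΔ : 0 ≤ (b - a) / N := div_nonneg (sub_nonneg.2 hab) N.cast_nonneg
  have hcell : ∀ k < N, ∀ x ∈ Ι (t k) (t (k + 1)), ‖g x - g (t k)‖ ≤ ε := by
    intro k hk x hx
    have hstep := gridPoint_succ_sub a b N k
    rw [uIoc_of_le (by linarith)] at hx
    have hk₀ := gridPoint_mem_Icc hab hk.le
    have hk₁ := gridPoint_mem_Icc hab (Nat.succ_le_of_lt hk)
    refine hmod x ⟨by linarith [hx.1, hk₀.1], by linarith [hx.2, hk₁.2]⟩ (t k) hk₀ ?_
    rw [abs_of_pos (sub_pos.2 hx.1)]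
    linarith [hx.2]
  have hsplit : ∫ x in a..b, g x = ∑ k ∈ range N, ∫ x in t k..t (k + 1), g x := by
    rw [intervalIntegral.sum_integral_adjacent_intervals fun k _ => hg.intervalIntegrable _ _]
    simp only [t, gridPoint]
    congr 1 <;> field_simp <;> ring
  calc ‖(∫ x in a..b, g x) - riemannSum g a b N‖
      = ‖∑ k ∈ range N, ∫ x in t k..t (k + 1), (g x - g (t k))‖ := by
        rw [hsplit, riemannSum, ← sum_sub_distrib]
        congr 1
        refine sum_congr rfl fun k _ => ?_
        rw [intervalIntegral.integral_sub (hg.intervalIntegrable _ _) intervalIntegrable_const,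
          intervalIntegral.integral_const, gridPoint_succ_sub]
    _ ≤ ∑ _k ∈ range N, ε * ((b - a) / N) := by
        refine norm_sum_le_of_le _ fun k hk => ?_
        refine (intervalIntegral.norm_integral_le_of_norm_le_const
          (hcell k (mem_range.1 hk))).trans_eq ?_
        rw [gridPoint_succ_sub, abs_of_nonneg hΔ]
    _ = ε * (b - a) := by
        rw [sum_const, card_range, nsmul_eq_mul]; field_simp

theorem norm_intervalIntegral_intervalIntegral_sub_riemannSum_le [CompleteSpace E]
    {g : ℝ → ℝ → E} {a b ε : ℝ} {N : ℕ} (hN : 0 < N) (hab : a ≤ b) (hg : Continuous (uncurry g))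
    (hmod : ∀ x ∈ Icc a b, ∀ x' ∈ Icc a b, ∀ y ∈ Icc a b, ∀ y' ∈ Icc a b,
      |x - x'| ≤ (b - a) / N → |y - y'| ≤ (b - a) / N → ‖g x y - g x' y'‖ ≤ ε) :
    ‖(∫ x in a..b, ∫ y in a..b, g x y) - riemannSum (fun x => riemannSum (g x) a b N) a b N‖
      ≤ 2 * ε * (b - a) ^ 2 := by
  set G := fun x => ∫ y in a..b, g x y
  have hΔ : 0 ≤ (b - a) / N := div_nonneg (sub_nonneg.2 hab) N.cast_nonneg
  have hgx : ∀ x, Continuous (g x) := fun x => hg.comp (Continuous.prodMk_right x)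
  have hGmod : ∀ x ∈ Icc a b, ∀ x' ∈ Icc a b, |x - x'| ≤ (b - a) / N →
      ‖G x - G x'‖ ≤ ε * (b - a) := by
    intro x hx x' hx' hxx'
    rw [← intervalIntegral.integral_sub ((hgx x).intervalIntegrable _ _)
      ((hgx x').intervalIntegrable _ _), ← abs_of_nonneg (sub_nonneg.2 hab)]
    refine intervalIntegral.norm_integral_le_of_norm_le_const fun y hy => ?_
    rw [uIoc_of_le hab] at hy
    exact hmod x hx x' hx' y (Ioc_subset_Icc_self hy) y (Ioc_subset_Icc_self hy) hxx'
      (by simpa using hΔ)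
  have hrow : ∀ k < N,
      ‖G (gridPoint a b N k) - riemannSum (g (gridPoint a b N k)) a b N‖ ≤ ε * (b - a) := by
    intro k hk
    have hx := gridPoint_mem_Icc hab hk.le
    exact norm_intervalIntegral_sub_riemannSum_le hN hab (hgx _)
      fun y hy y' hy' hyy' => hmod _ hx _ hx y hy y' hy' (by simpa using hΔ) hyy'
  calc _ ≤ ‖(∫ x in a..b, G x) - riemannSum G a b N‖
        + ‖riemannSum G a b N - riemannSum (fun x => riemannSum (g x) a b N) a b N‖ :=
        norm_sub_le_norm_sub_add_norm_sub _ _ _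
    _ ≤ ε * (b - a) * (b - a) + (b - a) * (ε * (b - a)) := by
        gcongr
        · exact norm_intervalIntegral_sub_riemannSum_le hN hab
            (intervalIntegral.continuous_parametric_intervalIntegral_of_continuous' hg a b) hGmod
        · rw [riemannSum_sub]
          exact norm_riemannSum_le hN hab hrow
    _ = 2 * ε * (b - a) ^ 2 := by ring

theorem tendsto_riemannSum_riemannSum [CompleteSpace E] {g : ℝ → ℝ → E} {a b : ℝ} (hab : a ≤ b)
    (hg : Continuous (uncurry g)) :
    Tendsto (fun N => riemannSum (fun x => riemannSum (g x) a b N) a b N) atTop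
      (𝓝 (∫ x in a..b, ∫ y in a..b, g x y)) := by
  rw [Metric.tendsto_atTop]
  intro δ hδ
  set ε := δ / (2 * (b - a) ^ 2 + 1)
  have hε : 0 < ε := by positivity
  obtain ⟨η, hη, hmod⟩ := Metric.uniformContinuousOn_iff.1
    ((isCompact_Icc.prod isCompact_Icc).uniformContinuousOn_of_continuous hg.continuousOn) ε hε
  obtain ⟨N₀, hN₀⟩ := exists_nat_gt ((b - a) / η)
  refine ⟨N₀ + 1, fun N hN => ?_⟩
  have hNpos : (0 : ℝ) < N := by exact_mod_cast Nat.succ_pos N₀ |>.trans_le hN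
  have hΔη : (b - a) / N < η := by
    rw [div_lt_iff₀ hNpos]
    rw [div_lt_iff₀ hη] at hN₀
    have : (N₀ : ℝ) + 1 ≤ N := by exact_mod_cast hN
    nlinarith
  rw [dist_comm, dist_eq_norm]
  calc _ ≤ 2 * ε * (b - a) ^ 2 := by
        refine norm_intervalIntegral_intervalIntegral_sub_riemannSum_le (by exact_mod_cast hNpos)
          hab hg fun x hx x' hx' y hy y' hy' hxx' hyy' => ?_
        rw [← dist_eq_norm]
        refine (hmod (x, y) ⟨hx, hy⟩ (x', y') ⟨hx', hy'⟩ ?_).le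
        rw [Prod.dist_eq, Real.dist_eq, Real.dist_eq]
        exact max_lt (hxx'.trans_lt hΔη) (hyy'.trans_lt hΔη)
    _ < δ := by
        rw [show 2 * ε * (b - a) ^ 2 = δ * (2 * (b - a) ^ 2 / (2 * (b - a) ^ 2 + 1)) by
          simp only [ε]; ring]
        exact mul_lt_of_lt_one_right hδ ((div_lt_one (by positivity)).2 (by linarith))

end RiemannSum

section ApproximateIdentity

variable {E : Type*} [NormedAddCommGroup E] [NormedSpace ℝ E] [CompleteSpace E]

theorem norm_integral_smul_sub_le {X : Type*} [MeasurableSpace X] {μ : Measure X} {k : X → ℝ}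
    {F : X → E} {c : E} {δ : ℝ} (hk : 0 ≤ k) (hk1 : ∫ x, k x ∂μ = 1)
    (hkF : Integrable (fun x => k x • F x) μ)
    (hF : ∀ x, k x ≠ 0 → ‖F x - c‖ ≤ δ) :
    ‖(∫ x, k x • F x ∂μ) - c‖ ≤ δ := by
  have hk_int : Integrable k μ := Integrable.of_integral_ne_zero (by rw [hk1]; exact one_ne_zero)
  calc ‖(∫ x, k x • F x ∂μ) - c‖ = ‖∫ x, k x • (F x - c) ∂μ‖ := by
        simp_rw [smul_sub]
        rw [integral_sub hkF (hk_int.smul_const c), integral_smul_const, hk1, one_smul]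
    _ ≤ ∫ x, k x * δ ∂μ := by
        refine norm_integral_le_of_norm_le (hk_int.mul_const δ) (ae_of_all _ fun x => ?_)
        rw [norm_smul, Real.norm_of_nonneg (hk x)]
        rcases eq_or_ne (k x) 0 with h0 | h0
        · simp [h0]
        · exact mul_le_mul_of_nonneg_left (hF x h0) (hk x)
    _ = δ := by rw [integral_mul_const, hk1, one_mul]

theorem tendsto_integral_smul_of_support_subset_ball {ι X : Type*} [PseudoMetricSpace X]
    [MeasurableSpace X] {μ : Measure X} {l : Filter ι} {k : ι → X → ℝ} {r : ι → ℝ} {F : X → E}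
    {x₀ : X}
    (hk : ∀ i, 0 ≤ k i) (hk1 : ∀ i, ∫ x, k i x ∂μ = 1) (hsupp : ∀ i, support (k i) ⊆ ball x₀ (r i))
    (hr : Tendsto r l (𝓝 0)) (hkF : ∀ i, Integrable (fun x => k i x • F x) μ)
    (hF : ContinuousAt F x₀) :
    Tendsto (fun i => ∫ x, k i x • F x ∂μ) l (𝓝 (F x₀)) := by
  rw [Metric.tendsto_nhds]
  intro δ hδ
  obtain ⟨η, hη, hFη⟩ := Metric.continuousAt_iff.1 hF (δ / 2) (half_pos hδ)
  filter_upwards [hr.eventually (gt_mem_nhds hη)] with i hri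
  rw [dist_eq_norm]
  refine (norm_integral_smul_sub_le (hk i) (hk1 i) (hkF i) fun x hx => ?_).trans_lt
    (half_lt_self hδ)
  rw [← dist_eq_norm]
  exact (hFη ((hsupp i hx).trans_le hri.le)).le

noncomputable def shrinkingBump {V : Type*} [NormedAddCommGroup V] [NormedSpace ℝ V] (c : V)
    (m : ℕ) : ContDiffBump c where
  rIn := 1 / (m + 2)
  rOut := 1 / (m + 1)
  rIn_pos := by positivity
  rIn_lt_rOut := one_div_lt_one_div_of_lt (by positivity) (by linarith)

lemma HasCompactSupport.mul_prod {X Y R : Type*} [TopologicalSpace X] [TopologicalSpace Y]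
    [MulZeroClass R] {u : X → R} {v : Y → R} (hu : HasCompactSupport u) (hv : HasCompactSupport v) :
    HasCompactSupport fun p : X × Y => u p.1 * v p.2 := by
  refine HasCompactSupport.intro' (hu.prod hv) (isClosed_tsupport u |>.prod (isClosed_tsupport v))
    fun p hp => ?_
  rcases not_and_or.1 hp with h | h
  · simp [image_eq_zero_of_notMem_tsupport h]
  · simp [image_eq_zero_of_notMem_tsupport h]

theorem tendsto_integral_shrinkingBump_mul_smul {F : ℝ × ℝ → E} (hF : Continuous F) (a b : ℝ) :
    Tendsto (fun m => ∫ p : ℝ × ℝ, ((shrinkingBump a m).normed volume p.1 *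
      (shrinkingBump b m).normed volume p.2) • F p) atTop (𝓝 (F (a, b))) := by
  refine tendsto_integral_smul_of_support_subset_ball (r := fun m : ℕ => 1 / ((m : ℝ) + 1))
    (fun m p => mul_nonneg (ContDiffBump.nonneg_normed _ _) (ContDiffBump.nonneg_normed _ _))
    (fun m => ?_) (fun m p hp => ?_) tendsto_one_div_add_atTop_nhds_zero_nat (fun m => ?_)
    hF.continuousAt
  · rw [Measure.volume_eq_prod, integral_prod_mul, ContDiffBump.integral_normed,
      ContDiffBump.integral_normed, one_mul]
  · rw [← ball_prod_same]
    obtain ⟨h1, h2⟩ := mul_ne_zero_iff.1 hp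
    exact ⟨(shrinkingBump a m).support_normed_eq (μ := volume) ▸ h1,
      (shrinkingBump b m).support_normed_eq (μ := volume) ▸ h2⟩
  · refine Continuous.integrable_of_hasCompactSupport ?_ ?_
    · have := (shrinkingBump a m).continuous_normed (μ := volume)
      have := (shrinkingBump b m).continuous_normed (μ := volume)
      fun_prop
    · exact HasCompactSupport.smul_right (f' := F) <|
        (ContDiffBump.hasCompactSupport_normed _).mul_prod (ContDiffBump.hasCompactSupport_normed _)

end ApproximateIdentity

def IsPositiveDefinite (f : ℝ → ℂ) : Prop :=
  ∀ (n : ℕ) (x : Fin n → ℝ) (c : Fin n → ℂ),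
    0 ≤ ∑ i, ∑ j, c i * (starRingEnd ℂ) (c j) * f (x i - x j)

lemma HasCompactSupport.exists_support_subset_Ioc {M : Type*} [Zero M] {φ : ℝ → M}
    (hφ : HasCompactSupport φ) : ∃ a b, a ≤ b ∧ support φ ⊆ Ioc a b := by
  obtain ⟨m, hm⟩ := hφ.isCompact.bddBelow
  obtain ⟨M, hM⟩ := hφ.isCompact.bddAbove
  refine ⟨m - 1, max m M, by linarith [le_max_left m M], fun x hx => ?_⟩
  have hx' := subset_tsupport φ hx
  exact ⟨by linarith [hm hx'], (hM hx').trans (le_max_right m M)⟩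

lemma integral_integral_eq_intervalIntegral_of_support_subset {φ ψ : ℝ → ℂ} {a b : ℝ}
    (hφ : support φ ⊆ Ioc a b) (hψ : support ψ ⊆ Ioc a b) (F : ℝ → ℝ → ℂ) :
    ∫ x, ∫ y, φ x * ψ y * F x y = ∫ x in a..b, ∫ y in a..b, φ x * ψ y * F x y := by
  have hinner : ∀ x, ∫ y, φ x * ψ y * F x y = ∫ y in a..b, φ x * ψ y * F x y := fun x =>
    (intervalIntegral.integral_eq_integral_of_support_subset
      (fun y hy => hψ fun h0 => hy (by simp [h0]))).symm
  simp_rw [hinner]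
  exact (intervalIntegral.integral_eq_integral_of_support_subset
    (fun x hx => hφ fun h0 => hx (by simp [h0]))).symm

lemma IsPositiveDefinite.riemannSum_nonneg {f : ℝ → ℂ} (hf : IsPositiveDefinite f) (φ : ℝ → ℂ)
    (a b : ℝ) (N : ℕ) :
    0 ≤ riemannSum (fun x => riemannSum
      (fun y => φ x * (starRingEnd ℂ) (φ y) * f (x - y)) a b N) a b N := by
  convert hf N (fun i => gridPoint a b N i) (fun i => ((b - a) / N : ℝ) * φ (gridPoint a b N i))
    using 1
  simp only [riemannSum, Finset.sum_range, Finset.smul_sum, Complex.real_smul, map_mul,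
    Complex.conj_ofReal]
  refine sum_congr rfl fun i _ => sum_congr rfl fun j _ => ?_
  ring

theorem IsPositiveDefinite.integral_integral_nonneg {f : ℝ → ℂ} (hf : Continuous f)
    (hpd : IsPositiveDefinite f) {φ : ℝ → ℂ} (hφ : Continuous φ) (hφc : HasCompactSupport φ) :
    0 ≤ ∫ x, ∫ y, φ x * (starRingEnd ℂ) (φ y) * f (x - y) := by
  obtain ⟨a, b, hab, hsupp⟩ := hφc.exists_support_subset_Ioc
  rw [integral_integral_eq_intervalIntegral_of_support_subset hsupp
    fun y hy => hsupp (by simpa using hy)]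
  exact ge_of_tendsto' (tendsto_riemannSum_riemannSum hab (by fun_prop))
    (hpd.riemannSum_nonneg φ a b)

lemma hasCompactSupport_sum_mul_ofReal {ι : Type*} [Fintype ι] {ρ : ι → ℝ → ℝ}
    (hρc : ∀ i, HasCompactSupport (ρ i)) (c : ι → ℂ) :
    HasCompactSupport fun t => ∑ i, c i * (ρ i t : ℂ) := by
  simpa only [Finset.sum_fn] using
    HasCompactSupport.finset_sum (s := univ) (f := fun i t => c i * (ρ i t : ℂ))
      fun i _ => ((hρc i).comp_left Complex.ofReal_zero).mul_left

theorem integral_integral_sum_mul_conj_eq {ι : Type*} [Fintype ι] {ρ : ι → ℝ → ℝ}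
    (hρ : ∀ i, Continuous (ρ i)) (hρc : ∀ i, HasCompactSupport (ρ i)) (c : ι → ℂ) {F : ℝ → ℂ}
    (hF : Continuous F) :
    ∫ x, ∫ y, (∑ i, c i * (ρ i x : ℂ)) * (starRingEnd ℂ) (∑ i, c i * (ρ i y : ℂ)) * F (x - y) =
      ∑ i, ∑ j, c i * (starRingEnd ℂ) (c j) * ∫ p : ℝ × ℝ, (ρ i p.1 * ρ j p.2) • F (p.1 - p.2) := by
  set Φ := fun t => ∑ i, c i * (ρ i t : ℂ)
  have hΦc : HasCompactSupport Φ := hasCompactSupport_sum_mul_ofReal hρc c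
  have hint : Integrable (uncurry fun x y => Φ x * (starRingEnd ℂ) (Φ y) * F (x - y))
      (volume.prod volume) := by
    refine Continuous.integrable_of_hasCompactSupport ?_
      ((hΦc.mul_prod (hΦc.comp_left (map_zero _))).mul_right)
    simp only [Φ]
    fun_prop
  have hint_term : ∀ i j, Integrable fun p : ℝ × ℝ => (ρ i p.1 * ρ j p.2) • F (p.1 - p.2) :=
    fun i j => Continuous.integrable_of_hasCompactSupport (by fun_prop)
      ((hρc i).mul_prod (hρc j)).smul_right
  rw [integral_integral hint]
  calc ∫ p : ℝ × ℝ, Φ p.1 * (starRingEnd ℂ) (Φ p.2) * F (p.1 - p.2)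
      = ∫ p : ℝ × ℝ, ∑ i, ∑ j, c i * (starRingEnd ℂ) (c j) *
          ((ρ i p.1 * ρ j p.2) • F (p.1 - p.2)) := by
        refine integral_congr_ae (ae_of_all _ fun p => ?_)
        simp only [Φ, map_sum, map_mul, Complex.conj_ofReal, Complex.real_smul]
        rw [sum_mul_sum, sum_mul]
        refine sum_congr rfl fun i _ => ?_
        rw [sum_mul]
        refine sum_congr rfl fun j _ => ?_
        push_cast
        ring
    _ = _ := by
        rw [integral_finsetSum _ fun i _ => integrable_finsetSum _ fun j _ =>
          (hint_term i j).const_mul _]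
        refine sum_congr rfl fun i _ => ?_
        rw [integral_finsetSum _ fun j _ => (hint_term i j).const_mul _]
        simp only [integral_const_mul]

theorem isPositiveDefinite_of_integral_integral_nonneg {f : ℝ → ℂ} (hf : Continuous f)
    (h : ∀ φ : ℝ → ℂ, Continuous φ → HasCompactSupport φ →
      0 ≤ ∫ x, ∫ y, φ x * (starRingEnd ℂ) (φ y) * f (x - y)) :
    IsPositiveDefinite f := by
  intro n x c
  set ρ : ℕ → Fin n → ℝ → ℝ := fun m i => (shrinkingBump (x i) m).normed volume
  have hρ : ∀ m i, Continuous (ρ m i) := fun m i => ContDiffBump.continuous_normed _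
  have hρc : ∀ m i, HasCompactSupport (ρ m i) := fun m i => ContDiffBump.hasCompactSupport_normed _
  have hlim : ∀ i j, Tendsto (fun m => ∫ p : ℝ × ℝ, (ρ m i p.1 * ρ m j p.2) • f (p.1 - p.2))
      atTop (𝓝 (f (x i - x j))) := fun i j =>
    tendsto_integral_shrinkingBump_mul_smul (by fun_prop) (x i) (x j)
  refine ge_of_tendsto' (tendsto_finsetSum _ fun i _ => tendsto_finsetSum _ fun j _ =>
    (hlim i j).const_mul (c i * (starRingEnd ℂ) (c j))) fun m => ?_
  rw [← integral_integral_sum_mul_conj_eq (hρ m) (hρc m) c hf]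
  exact h _ (by fun_prop) (hasCompactSupport_sum_mul_ofReal (hρc m) c)

/-- A continuous function `f : ℝ → ℂ` is positive definite (all finite quadratic
sums `∑ᵢ∑ⱼ cᵢ conj(cⱼ) f(xᵢ - xⱼ)` are nonnegative reals) if and only if all double
integrals `∫∫ φ(x) conj(φ(y)) f(x - y)` over continuous compactly supported `φ`
are nonnegative reals. -/
theorem stmt_0 (f : ℝ → ℂ) (hf : Continuous f) :
    (∀ (n : ℕ) (x : Fin n → ℝ) (c : Fin n → ℂ),
      0 ≤ ∑ i, ∑ j, c i * (starRingEnd ℂ) (c j) * f (x i - x j)) ↔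
    (∀ φ : ℝ → ℂ, Continuous φ → HasCompactSupport φ →
      0 ≤ ∫ x : ℝ, ∫ y : ℝ, φ x * (starRingEnd ℂ) (φ y) * f (x - y)) :=
  ⟨fun hpd _ hφ hφc => IsPositiveDefinite.integral_integral_nonneg hf hpd hφ hφc,
    isPositiveDefinite_of_integral_integral_nonneg hf⟩
end

section
/- For every Schwartz function φ : ℝ → ℂ, one has ∑_{n ∈ ℤ} |φ̂(n)|² = 2π · ∑_{k ∈ ℤ} (φ ⋆ φ♯)(2πk), where both sums converge. -/
/-!
Put `g(u) = φ(2πu)`. Rescaling turns `φ̂(n)` into `2π 𝓕g(-n)` and `(φ ⋆ φ♯)(2πk)` into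
`2π (g ⋆ g♯)(k)`, where `𝓕g(ξ) = ∫ g(x) e^{-2πixξ} dx` is Mathlib's normalisation.
Plancherel's theorem, applied to `g` and its translate by `t`, shows that the autocorrelation
`(g ⋆ g♯)(t)` is the inverse Fourier transform at `t` of the Schwartz function `H = |𝓕g|²`.
Poisson summation for `𝓕⁻H` then reads `∑ₖ (g ⋆ g♯)(k) = ∑ₙ H(n) = ∑ₙ |𝓕g(n)|²`.
-/

open MeasureTheory
open scoped FourierTransform ComplexConjugate SchwartzMap RealInnerProductSpace

noncomputable section

def autocorrelation {V : Type*} [AddGroup V] [MeasureSpace V] (f : V → ℂ) (t : V) : ℂ :=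
  ∫ y, f y * conj (f (y - t))

theorem autocorrelation_comp_mul (f : ℝ → ℂ) (c t : ℝ) :
    autocorrelation (fun x ↦ f (c * x)) t = |c⁻¹| • autocorrelation f (c * t) := by
  simp only [autocorrelation, mul_sub]
  exact Measure.integral_comp_mul_left (fun y ↦ f y * conj (f (y - c * t))) c

theorem integral_mul_cexp_eq_fourier_comp_mul (f : ℝ → ℂ) (ξ : ℝ) :
    ∫ x, f x * Complex.exp (Complex.I * ξ * x)
      = 2 * Real.pi * 𝓕 (fun u ↦ f (2 * Real.pi * u)) (-ξ) := by
  have hscale := Measure.integral_comp_mul_left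
    (fun x ↦ f x * Complex.exp (Complex.I * ξ * x)) (2 * Real.pi)
  rw [abs_of_pos (by positivity), eq_inv_smul_iff₀ (by positivity)] at hscale
  rw [← hscale, Real.fourier_real_eq_integral_exp_smul, Complex.real_smul]
  push_cast
  congr 2 with u
  rw [smul_eq_mul, mul_comm]
  ring_nf

namespace SchwartzMap

section normSq

variable {E : Type*} [NormedAddCommGroup E] [NormedSpace ℝ E]

def normSq (f : 𝓢(E, ℂ)) : 𝓢(E, ℂ) :=
  pairing (ContinuousLinearMap.mul ℝ ℂ) (f.postcompCLM (Complex.conjCLE : ℂ →L[ℝ] ℂ)) f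

theorem normSq_apply (f : 𝓢(E, ℂ)) (x : E) : f.normSq x = ((‖f x‖ ^ 2 : ℝ) : ℂ) := by
  rw [Complex.ofReal_pow, ← Complex.conj_mul']
  rfl

end normSq

theorem exists_comp_mul {F : Type*} [NormedAddCommGroup F] [NormedSpace ℝ F] (f : 𝓢(ℝ, F))
    {c : ℝ} (hc : c ≠ 0) : ∃ g : 𝓢(ℝ, F), ⇑g = fun x ↦ f (c * x) :=
  ⟨compCLMOfContinuousLinearEquiv ℝ
    (LinearEquiv.smulOfNeZero ℝ ℝ c hc).toContinuousLinearEquiv f, rfl⟩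

section InnerProductSpace

variable {V : Type*} [NormedAddCommGroup V] [InnerProductSpace ℝ V] [FiniteDimensional ℝ V]
  [MeasurableSpace V] [BorelSpace V]

theorem fourier_compSubConstCLM (f : 𝓢(V, ℂ)) (a ξ : V) :
    𝓕 (f.compSubConstCLM ℂ a) ξ = (𝐞 (-⟪a, ξ⟫) : ℂ) * 𝓕 f ξ := by
  have htranslate : ⇑(f.compSubConstCLM ℂ a) = f ∘ fun v ↦ v + -a := by
    ext v
    simp [sub_eq_add_neg]
  rw [fourier_coe, htranslate]
  refine (congrFun (VectorFourier.fourierIntegral_comp_add_right 𝐞 volume (innerₗ V) f (-a)) ξ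
    ).trans ?_
  simp only [Circle.smul_def, innerₗ_apply_apply, inner_neg_left, smul_eq_mul]
  rfl

theorem autocorrelation_eq_fourierInv_normSq (f : 𝓢(V, ℂ)) (t : V) :
    autocorrelation f t = (𝓕⁻ (normSq (𝓕 f)) : 𝓢(V, ℂ)) t := by
  calc autocorrelation f t = ∫ y, inner ℂ (f.compSubConstCLM ℂ t y) (f y) := by
        simp only [autocorrelation, compSubConstCLM_apply, RCLike.inner_apply]
    _ = ∫ ξ, inner ℂ (𝓕 (f.compSubConstCLM ℂ t) ξ) (𝓕 f ξ) :=
        (integral_inner_fourier_fourier _ f).symm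
    _ = ∫ ξ, 𝐞 ⟪ξ, t⟫ • normSq (𝓕 f) ξ := by
        congr 1 with ξ
        simp only [fourier_compSubConstCLM, RCLike.inner_apply, map_mul, normSq_apply]
        rw [← Circle.coe_inv_eq_conj, ← AddChar.map_neg_eq_inv, neg_neg, real_inner_comm,
          Circle.smul_def, smul_eq_mul, Complex.ofReal_pow, ← Complex.mul_conj']
        ring
    _ = _ := by rw [fourierInv_coe, Real.fourierInv_eq]

end InnerProductSpace

theorem summable_int {F : Type*} [NormedAddCommGroup F] [NormedSpace ℝ F] [CompleteSpace F]
    (f : 𝓢(ℝ, F)) : Summable fun n : ℤ ↦ f n :=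
  summable_of_isBigO (Real.summable_abs_int_rpow one_lt_two)
    ((f.isBigO_cocompact_rpow (-2)).comp_tendsto Int.tendsto_coe_cofinite)

theorem tsum_int_eq_tsum_int_fourier (f : 𝓢(ℝ, ℂ)) : ∑' n : ℤ, f n = ∑' n : ℤ, 𝓕 f n := by
  simpa using f.tsum_eq_tsum_fourier 0

theorem summable_norm_sq_fourier_int (g : 𝓢(ℝ, ℂ)) : Summable fun n : ℤ ↦ ‖𝓕 g n‖ ^ 2 := by
  simpa only [normSq_apply, Complex.summable_ofReal] using (normSq (𝓕 g)).summable_int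

theorem summable_autocorrelation_int (g : 𝓢(ℝ, ℂ)) :
    Summable fun k : ℤ ↦ autocorrelation g k := by
  simpa only [autocorrelation_eq_fourierInv_normSq] using (𝓕⁻ (normSq (𝓕 g))).summable_int

theorem tsum_norm_sq_fourier_int_eq_tsum_autocorrelation (g : 𝓢(ℝ, ℂ)) :
    ((∑' n : ℤ, ‖𝓕 g n‖ ^ 2 : ℝ) : ℂ) = ∑' k : ℤ, autocorrelation g k := by
  calc ((∑' n : ℤ, ‖𝓕 g n‖ ^ 2 : ℝ) : ℂ) = ∑' n : ℤ, normSq (𝓕 g) n := by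
        simp only [Complex.ofReal_tsum, normSq_apply]
    _ = ∑' n : ℤ, 𝓕 (𝓕⁻ (normSq (𝓕 g))) n := by rw [FourierInvPair.fourier_fourierInv_eq]
    _ = ∑' k : ℤ, autocorrelation g k := by
        rw [← tsum_int_eq_tsum_int_fourier]
        simp only [autocorrelation_eq_fourierInv_normSq]

end SchwartzMap

end

open SchwartzMap

/-- The Dirac comb identity (Poisson summation for the pair `∑ δ_n`, `2π ∑ δ_{2πk}`):
for every Schwartz function `φ`,
`∑_{n ∈ ℤ} |φ̂(n)|² = 2π ∑_{k ∈ ℤ} (φ ⋆ φ♯)(2πk)`, both sums being convergent.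
Here `φ̂(λ) = ∫ φ(x) e^{iλx} dx` and `(φ ⋆ φ♯)(t) = ∫ φ(y) conj(φ(y - t)) dy`. -/
theorem stmt_11 (φ : SchwartzMap ℝ ℂ) :
    Summable (fun n : ℤ => ‖∫ x : ℝ, φ x * Complex.exp (Complex.I * (n : ℂ) * (x : ℂ))‖ ^ 2) ∧
    Summable (fun k : ℤ => ∫ y : ℝ, φ y * (starRingEnd ℂ) (φ (y - 2 * Real.pi * k))) ∧
    ((∑' n : ℤ, ‖∫ x : ℝ, φ x * Complex.exp (Complex.I * (n : ℂ) * (x : ℂ))‖ ^ 2 : ℝ) : ℂ)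
      = 2 * (Real.pi : ℂ)
          * ∑' k : ℤ, ∫ y : ℝ, φ y * (starRingEnd ℂ) (φ (y - 2 * Real.pi * k)) := by
  obtain ⟨g, hg⟩ := φ.exists_comp_mul (c := 2 * Real.pi) (by positivity)
  have hfourier (n : ℤ) : ‖∫ x : ℝ, φ x * Complex.exp (Complex.I * (n : ℂ) * (x : ℂ))‖ ^ 2
      = (2 * Real.pi) ^ 2 * ‖𝓕 g ((-n : ℤ) : ℝ)‖ ^ 2 := by
    have := integral_mul_cexp_eq_fourier_comp_mul φ n
    push_cast at this ⊢
    rw [this, ← hg, ← fourier_coe, norm_mul, mul_pow]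
    norm_num [abs_of_pos Real.pi_pos]
  have hautocorr (k : ℤ) : ∫ y : ℝ, φ y * (starRingEnd ℂ) (φ (y - 2 * Real.pi * k))
      = 2 * Real.pi * autocorrelation g k := by
    change autocorrelation φ (2 * Real.pi * k) = _
    rw [hg, autocorrelation_comp_mul, abs_of_pos (by positivity), Complex.real_smul,
      ← mul_assoc]
    push_cast
    rw [mul_inv_cancel₀ (by exact_mod_cast Real.two_pi_pos.ne'), one_mul]
  simp_rw [hfourier, hautocorr]
  refine ⟨((summable_norm_sq_fourier_int g).comp_injective neg_injective).mul_left _,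
    (summable_autocorrelation_int g).mul_left _, ?_⟩
  rw [tsum_mul_left, tsum_mul_left, ← tsum_norm_sq_fourier_int_eq_tsum_autocorrelation,
    tsum_comp_neg (fun n : ℤ ↦ ‖𝓕 g (n : ℝ)‖ ^ 2)]
  push_cast
  ring
end
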